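/- Let Λ be an Artin algebra and (C, T, F) a cotorsion torsion triple in mod Λ. Then the Auslander–Reiten translation τ induces an equivalence from the additive quotient C/(proj Λ) to F. -/

import Mathlib

/-!
Injectives lie in `T = C^{⊥₁}` and `Hom(T, F) = 0`, so a map into an object of `F` that factors
through an injective vanishes: `F` embeds fully faithfully into the injectively stable category.
So does `C/proj`, through the projectively stable category followed by `τ`. The two essential
images agree. For `M ∈ C`, Auslander–Reiten duality makes the inclusion of the torsion part of
`τM` factor through an injective, so `τM` is stably isomorphic to its torsion-free quotient.
Conversely, if `τM` is stably isomorphic to some `N ∈ F`, every map from an object of `T` to `τM`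
factors through an injective, i.e. `Ext¹(M, T) = 0`, so `M ∈ C`. Two fully faithful functors with
the same essential image differ by an equivalence.
-/

open CategoryTheory Category Limits

attribute [local instance] CategoryTheory.Abelian.hasFiniteBiproducts
attribute [local instance] CategoryTheory.Limits.HasFiniteBiproducts.of_hasFiniteProducts

universe w v u

namespace Paper

variable {A : Type u} [Category.{v} A] [Abelian A]

/-- `IsSes i p` expresses that `0 ⟶ X ⟶ Y ⟶ Z ⟶ 0` is a short exact sequence. -/
def IsSes {X Y Z : A} (i : X ⟶ Y) (p : Y ⟶ Z) : Prop :=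
  ∃ w : i ≫ p = 0, (ShortComplex.mk i p w).ShortExact

/-- `Ext¹(X, Y) = 0`, phrased as: every extension of `X` by `Y` splits. -/
def Ext1Zero (X Y : A) : Prop :=
  ∀ ⦃E : A⦄ (i : Y ⟶ E) (p : E ⟶ X), IsSes i p → ∃ s : X ⟶ E, s ≫ p = 𝟙 X

/-- A torsion pair `(T, F)` of (strictly full) subcategories of an abelian category. -/
structure IsTorsionPair (T F : Set A) : Prop where
  isoClosed_torsion : ∀ {X Y : A}, (X ≅ Y) → X ∈ T → Y ∈ T
  isoClosed_torsionFree : ∀ {X Y : A}, (X ≅ Y) → X ∈ F → Y ∈ F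
  hom_zero : ∀ {X Y : A}, X ∈ T → Y ∈ F → ∀ f : X ⟶ Y, f = 0
  seq : ∀ X : A, ∃ (tX fX : A) (i : tX ⟶ X) (p : X ⟶ fX), tX ∈ T ∧ fX ∈ F ∧ IsSes i p

/-- A (complete) cotorsion pair `(C, D)` in an abelian category. -/
structure IsCotorsionPair (C D : Set A) : Prop where
  left_eq : C = {X : A | ∀ Y ∈ D, Ext1Zero X Y}
  right_eq : D = {Y : A | ∀ X ∈ C, Ext1Zero X Y}
  seq₁ : ∀ X : A, ∃ (dX cX : A) (i : dX ⟶ cX) (p : cX ⟶ X), dX ∈ D ∧ cX ∈ C ∧ IsSes i p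
  seq₂ : ∀ X : A, ∃ (dX cX : A) (i : X ⟶ dX) (p : dX ⟶ cX), dX ∈ D ∧ cX ∈ C ∧ IsSes i p

/-- `f` factors through some object belonging to the class `P`. -/
def FactorsThroughClass (P : Set A) {X Y : A} (f : X ⟶ Y) : Prop :=
  ∃ (Z : A) (_ : Z ∈ P) (a : X ⟶ Z) (b : Z ⟶ Y), a ≫ b = f

/-- The hom-relation on the full subcategory on `S` identifying two morphisms whose
difference factors through an object of `P`. -/
def quotRel (S P : Set A) : HomRel (ObjectProperty.FullSubcategory (· ∈ S)) :=
  fun {X Y} f g =>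
    FactorsThroughClass P ((show X.obj ⟶ Y.obj from f.hom) - (show X.obj ⟶ Y.obj from g.hom))

/-- The additive quotient of the full subcategory on `S` by the morphisms factoring
through objects of `P`. -/
abbrev AddQuot (S P : Set A) := CategoryTheory.Quotient (quotRel S P)

/-- The subcategory of quotients of (finite direct sums of) objects of `T`. -/
def Fac (T : Set A) : Set A := {X : A | ∃ Y ∈ T, ∃ p : Y ⟶ X, Epi p}

/-- The right `Hom`-orthogonal `T^⊥`. -/
def rightHomPerp (T : Set A) : Set A := {X : A | ∀ Y ∈ T, ∀ f : Y ⟶ X, f = 0}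

/-- The left `Hom`-orthogonal `^⊥F`. -/
def leftHomPerp (F : Set A) : Set A := {X : A | ∀ Y ∈ F, ∀ f : X ⟶ Y, f = 0}

/-- The right `Ext¹`-orthogonal `T^{⊥₁}`. -/
def rightExt1Perp (T : Set A) : Set A := {X : A | ∀ Y ∈ T, Ext1Zero Y X}

/-- The left `Ext¹`-orthogonal `^{⊥₁}D`. -/
def leftExt1Perp (D : Set A) : Set A := {X : A | ∀ Y ∈ D, Ext1Zero X Y}

/-- `X` has projective dimension at most one: it has a length-one projective resolution. -/
def PdLeOne (X : A) : Prop :=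
  ∃ (P₁ P₀ : A) (i : P₁ ⟶ P₀) (p : P₀ ⟶ X), Projective P₁ ∧ Projective P₀ ∧ IsSes i p

/-- A weak tilting subcategory of an abelian category with enough projectives. -/
structure IsWeakTilting (T : Set A) : Prop where
  sum_mem : ∀ {X Y : A}, X ∈ T → Y ∈ T → (X ⊞ Y) ∈ T
  summand_mem : ∀ {X Y : A}, X ∈ T → (∃ (s : Y ⟶ X) (r : X ⟶ Y), s ≫ r = 𝟙 Y) → Y ∈ T
  ext1_zero : ∀ {X Y : A}, X ∈ T → Y ∈ T → Ext1Zero X Y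
  pd_le_one : ∀ X ∈ T, PdLeOne X
  coresolution : ∀ P : A, Projective P → ∃ (T₀ T₁ : A) (i : P ⟶ T₀) (p : T₀ ⟶ T₁),
    T₀ ∈ T ∧ T₁ ∈ T ∧ IsSes i p

/-- `φ : X ⟶ E` is a right `T`-approximation of `E`. -/
def IsRightApprox (T : Set A) {X E : A} (φ : X ⟶ E) : Prop :=
  X ∈ T ∧ ∀ X' ∈ T, ∀ f : X' ⟶ E, ∃ g : X' ⟶ X, g ≫ φ = f

/-- A tilting subcategory: a weak tilting subcategory that is contravariantly finite. -/
structure IsTilting (T : Set A) extends IsWeakTilting T : Prop where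
  contravariantly_finite : ∀ E : A, ∃ (X : A) (φ : X ⟶ E), IsRightApprox T φ

/-- The category `mod Λ` of finitely generated `Λ`-modules. -/
abbrev ModF (Λ : Type u) [Ring Λ] :=
  ObjectProperty.FullSubcategory (fun M : ModuleCat.{u} Λ => Module.Finite Λ M)

/-- The relation identifying morphisms whose difference factors through an object
of the class `P`. -/
def stableRel {B : Type u} [Category.{v} B] [Abelian B] (P : Set B) : HomRel B :=
  fun {X Y} f g => FactorsThroughClass P (f - g)

/-- The stable category of `B` modulo morphisms factoring through objects of `P`. -/
abbrev StableCat {B : Type u} [Category.{v} B] [Abelian B] (P : Set B) :=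
  CategoryTheory.Quotient (stableRel P)

open ZeroObject Preadditive

lemma FactorsThroughClass.precomp {B : Type*} [Category B] {P : Set B} {W X Y : B} (g : W ⟶ X)
    {f : X ⟶ Y} (h : FactorsThroughClass P f) : FactorsThroughClass P (g ≫ f) := by
  obtain ⟨Z, hZ, a, b, rfl⟩ := h
  exact ⟨Z, hZ, g ≫ a, b, assoc g a b⟩

lemma FactorsThroughClass.postcomp {B : Type*} [Category B] {P : Set B} {X Y W : B} {f : X ⟶ Y}
    (g : Y ⟶ W) (h : FactorsThroughClass P f) : FactorsThroughClass P (f ≫ g) := by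
  obtain ⟨Z, hZ, a, b, rfl⟩ := h
  exact ⟨Z, hZ, a, b ≫ g, (assoc a b g).symm⟩

section StableCategories

variable {P : Set A}

lemma FactorsThroughClass.neg {X Y : A} {f : X ⟶ Y} (h : FactorsThroughClass P f) :
    FactorsThroughClass P (-f) := by
  obtain ⟨Z, hZ, a, b, rfl⟩ := h
  exact ⟨Z, hZ, a, -b, comp_neg a b⟩

lemma FactorsThroughClass.add (hP : ∀ {X Y : A}, X ∈ P → Y ∈ P → (X ⊞ Y) ∈ P)
    {X Y : A} {f g : X ⟶ Y} (hf : FactorsThroughClass P f) (hg : FactorsThroughClass P g) :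
    FactorsThroughClass P (f + g) := by
  obtain ⟨Z₁, hZ₁, a₁, b₁, rfl⟩ := hf
  obtain ⟨Z₂, hZ₂, a₂, b₂, rfl⟩ := hg
  exact ⟨Z₁ ⊞ Z₂, hP hZ₁ hZ₂, biprod.lift a₁ a₂, biprod.desc b₁ b₂, biprod.lift_desc ..⟩

lemma FactorsThroughClass.eq_zero {F : Set A} (hPF : P ⊆ leftHomPerp F) {X Y : A} (hY : Y ∈ F)
    {f : X ⟶ Y} (h : FactorsThroughClass P f) : f = 0 := by
  obtain ⟨Z, hZ, a, b, rfl⟩ := h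
  rw [hPF hZ Y hY b, comp_zero]

lemma stableRel_congruence (h0 : (0 : A) ∈ P)
    (hP : ∀ {X Y : A}, X ∈ P → Y ∈ P → (X ⊞ Y) ∈ P) : Congruence (stableRel P) where
  equivalence :=
    { refl := fun _ => ⟨0, h0, 0, 0, by rw [comp_zero, sub_self]⟩
      symm := fun h => by
        simpa only [stableRel, neg_sub] using h.neg
      trans := fun h₁ h₂ => by
        simpa only [stableRel, sub_add_sub_cancel] using h₁.add hP h₂ }
  comp_left := fun f _ _ h => by
    simpa only [stableRel, comp_sub] using h.precomp f
  comp_right := fun g h => by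
    simpa only [stableRel, sub_comp] using h.postcomp g

instance : Congruence (stableRel {X : A | Injective X}) :=
  stableRel_congruence (inferInstanceAs (Injective (0 : A)))
    fun {X Y} (_ : Injective X) (_ : Injective Y) => inferInstanceAs (Injective (X ⊞ Y))

instance : Congruence (stableRel {X : A | Projective X}) :=
  stableRel_congruence (inferInstanceAs (Projective (0 : A)))
    fun {X Y} (_ : Projective X) (_ : Projective Y) => inferInstanceAs (Projective (X ⊞ Y))

end StableCategories

lemma ext1Zero_of_injective (X : A) {I : A} [Injective I] : Ext1Zero X I := by
  rintro E i p ⟨w, hses⟩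
  have : Injective (ShortComplex.mk i p w).X₁ := ‹Injective I›
  exact ⟨hses.splittingOfInjective.s, hses.splittingOfInjective.s_g⟩

lemma IsCotorsionPair.injective_mem_right {C T : Set A} (hct : IsCotorsionPair C T)
    {I : A} [Injective I] : I ∈ T := by
  rw [hct.right_eq]
  exact fun X _ => ext1Zero_of_injective X

lemma IsTorsionPair.subset_leftHomPerp {T F : Set A} (ht : IsTorsionPair T F) :
    T ⊆ leftHomPerp F :=
  fun _ hX _ hY => ht.hom_zero hX hY

def AddQuot.toStableCat (S P : Set A) : AddQuot S P ⥤ StableCat P :=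
  CategoryTheory.Quotient.lift _ (ObjectProperty.ι _ ⋙ Quotient.functor (stableRel P))
    fun _ _ _ _ h => CategoryTheory.Quotient.sound _ h

instance (S P : Set A) : (AddQuot.toStableCat S P).Full where
  map_surjective {X Y} f := by
    obtain ⟨f, rfl⟩ := (Quotient.functor (stableRel P)).map_surjective f
    exact ⟨(Quotient.functor _).map (ObjectProperty.homMk f : X.as ⟶ Y.as), rfl⟩

instance (S P : Set A) [Congruence (stableRel P)] : (AddQuot.toStableCat S P).Faithful where
  map_injective {X Y} f g h := by
    obtain ⟨f, rfl⟩ := (Quotient.functor _).map_surjective f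
    obtain ⟨g, rfl⟩ := (Quotient.functor _).map_surjective g
    exact CategoryTheory.Quotient.sound _ ((Quotient.functor_map_eq_iff (stableRel P) _ _).mp h)

def toStableCat (F P : Set A) : ObjectProperty.FullSubcategory (· ∈ F) ⥤ StableCat P :=
  ObjectProperty.ι _ ⋙ Quotient.functor (stableRel P)

instance (F P : Set A) : (toStableCat F P).Full :=
  inferInstanceAs (ObjectProperty.ι _ ⋙ Quotient.functor (stableRel P)).Full

lemma faithful_toStableCat {F P : Set A} [Congruence (stableRel P)] (hPF : P ⊆ leftHomPerp F) :
    (toStableCat F P).Faithful where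
  map_injective {X Y} f g h := by
    ext
    exact sub_eq_zero.mp <|
      ((Quotient.functor_map_eq_iff (stableRel P) _ _).mp h).eq_zero hPF Y.property

lemma FactorsThroughClass.of_iso_stableCat {P : Set A} [Congruence (stableRel P)] {X N Z : A}
    (c : (⟨X⟩ : StableCat P) ≅ ⟨N⟩) (hZ : ∀ g : Z ⟶ N, g = 0) (f : Z ⟶ X) :
    FactorsThroughClass P f := by
  let Q := Quotient.functor (stableRel P)
  obtain ⟨u, hu⟩ := Q.map_surjective c.hom
  obtain ⟨v, hv⟩ := Q.map_surjective c.inv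
  have hf : Q.map f = Q.map 0 :=
    calc Q.map f = Q.map f ≫ c.hom ≫ c.inv := by rw [c.hom_inv_id]; exact (comp_id _).symm
      _ = Q.map ((f ≫ u) ≫ v) := by rw [← hu, ← hv, Q.map_comp, Q.map_comp, assoc]
      _ = Q.map 0 := by rw [hZ (f ≫ u), zero_comp]
  simpa only [stableRel, sub_zero] using (Quotient.functor_map_eq_iff _ _ _).mp hf

lemma isIso_stableCat_map_of_isSes {K X N : A} {i : K ⟶ X} {p : X ⟶ N} (hses : IsSes i p)
    (hi : FactorsThroughClass {Z : A | Injective Z} i)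
    (hN : N ∈ rightHomPerp {Z : A | Injective Z}) :
    IsIso ((Quotient.functor (stableRel {Z : A | Injective Z})).map p) := by
  obtain ⟨w, hses⟩ := hses
  obtain ⟨I, hI, u, v, rfl⟩ := hi
  have : Injective I := hI
  have : Mono (u ≫ v) := hses.mono_f
  have : Epi p := hses.epi_g
  -- `u` extends along `i = u ≫ v` to `u'`; then `𝟙 - u' ≫ v` kills `i` and so factors through `p`.
  let u' := Injective.factorThru u (u ≫ v)
  have hu' : (u ≫ v) ≫ u' = u := Injective.comp_factorThru u (u ≫ v)
  have hk : (u ≫ v) ≫ (𝟙 X - u' ≫ v) = 0 := by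
    rw [comp_sub, comp_id, ← assoc, hu', sub_self]
  let s := hses.exact.desc _ hk
  have hps : p ≫ s = 𝟙 X - u' ≫ v := hses.exact.g_desc _ hk
  have hsp : s ≫ p = 𝟙 N := by
    rw [← cancel_epi p, reassoc_of% hps, sub_comp, id_comp, assoc, hN I hI (v ≫ p), comp_zero,
      sub_zero, comp_id]
  refine ⟨(Quotient.functor _).map s, ?_, ?_⟩
  · rw [← Functor.map_comp]
    refine (CategoryTheory.Quotient.sound _ ?_).trans ((Quotient.functor _).map_id X)
    show FactorsThroughClass _ (p ≫ s - 𝟙 X)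
    rw [hps, sub_sub_cancel_left]
    exact FactorsThroughClass.neg ⟨I, hI, u', v, rfl⟩
  · rw [← Functor.map_comp, hsp]
    exact (Quotient.functor _).map_id N

lemma isEquivalence_essImage_liftFunctor {J C D : Type*} [Category* J] [Category* C]
    [Category* D] (G : J ⥤ D) (F : C ⥤ D) [G.Full] [G.Faithful] [F.Full] [F.Faithful]
    (hG : ∀ j, F.essImage (G.obj j)) (hF : ∀ c, G.essImage (F.obj c)) :
    (Functor.essImage.liftFunctor G F hG).IsEquivalence := by
  let iso := Functor.essImage.liftFunctorCompIso G F hG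
  have := Functor.Full.of_comp_faithful_iso iso
  have := Functor.Faithful.of_comp_iso iso
  refine { essSurj := ⟨fun c => ?_⟩ }
  obtain ⟨j, ⟨e⟩⟩ := hF c
  exact ⟨j, ⟨F.preimageIso (iso.app j ≪≫ e)⟩⟩

section CotorsionTorsionTriple

variable {C T F : Set A} (tau : StableCat {X : A | Projective X} ≌ StableCat {X : A | Injective X})

lemma tau_mem_essImage_toStableCat
    (hAR : ∀ M X : A, Ext1Zero M X →
      ∀ f : X ⟶ (tau.functor.obj ⟨M⟩).as, FactorsThroughClass {Y : A | Injective Y} f)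
    (hct : IsCotorsionPair C T) (ht : IsTorsionPair T F) {M : A} (hM : M ∈ C) :
    (toStableCat F {Z : A | Injective Z}).essImage (tau.functor.obj ⟨M⟩) := by
  obtain ⟨K, N, i, p, hK, hN, hses⟩ := ht.seq (tau.functor.obj ⟨M⟩).as
  have hi : FactorsThroughClass {Z : A | Injective Z} i :=
    hAR M K ((hct.left_eq ▸ hM : M ∈ {X | ∀ Y ∈ T, Ext1Zero X Y}) K hK) i
  have hN' : N ∈ rightHomPerp {Z : A | Injective Z} := fun I (_ : Injective I) =>
    ht.hom_zero hct.injective_mem_right hN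
  have := isIso_stableCat_map_of_isSes hses hi hN'
  exact ⟨⟨N, hN⟩, ⟨(asIso ((Quotient.functor _).map p)).symm⟩⟩

lemma mem_of_tau_iso
    (hAR : ∀ M X : A, (∀ f : X ⟶ (tau.functor.obj ⟨M⟩).as,
      FactorsThroughClass {Y : A | Injective Y} f) → Ext1Zero M X)
    (hct : IsCotorsionPair C T) (ht : IsTorsionPair T F) {M N : A} (hN : N ∈ F)
    (c : tau.functor.obj ⟨M⟩ ≅ ⟨N⟩) : M ∈ C := by
  rw [hct.left_eq]
  exact fun Z hZ => hAR M Z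
    (FactorsThroughClass.of_iso_stableCat c fun g => ht.hom_zero hZ hN g)

theorem exists_equivalence_addQuot_torsionFree
    (hAR : ∀ M X : A, Ext1Zero M X ↔
      ∀ f : X ⟶ (tau.functor.obj ⟨M⟩).as, FactorsThroughClass {Y : A | Injective Y} f)
    (hct : IsCotorsionPair C T) (ht : IsTorsionPair T F) :
    ∃ e : AddQuot C {X : A | Projective X} ⥤ ObjectProperty.FullSubcategory (· ∈ F),
      e.IsEquivalence ∧
      ∀ (X : A) (hX : X ∈ C),
        Nonempty ((⟨(e.obj ((Quotient.functor
            (quotRel C {X : A | Projective X})).obj ⟨X, hX⟩)).obj⟩ :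
          StableCat {X : A | Injective X}) ≅ tau.functor.obj ⟨X⟩) := by
  have := faithful_toStableCat (F := F) (P := {Z : A | Injective Z}) fun I (_ : Injective I) =>
    ht.subset_leftHomPerp hct.injective_mem_right
  let H := AddQuot.toStableCat C {X : A | Projective X} ⋙ tau.functor
  have hH : ∀ X, (toStableCat F _).essImage (H.obj X) := fun X =>
    tau_mem_essImage_toStableCat tau (fun M X => (hAR M X).mp) hct ht X.as.property
  have hF : ∀ N, H.essImage ((toStableCat F _).obj N) := fun N =>
    let c := tau.counitIso.app ⟨N.obj⟩
    ⟨⟨⟨_, mem_of_tau_iso tau (fun M X => (hAR M X).mpr) hct ht N.property c⟩⟩, ⟨c⟩⟩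
  exact ⟨_, isEquivalence_essImage_liftFunctor H _ hH hF,
    fun _ _ => ⟨(Functor.essImage.liftFunctorCompIso H _ hH).app _⟩⟩

end CotorsionTorsionTriple

theorem statement15_general (L : Type u) [Ring L]
    [Abelian (ModF L)]
    (tau : StableCat {X : ModF L | Projective X} ≌ StableCat {X : ModF L | Injective X})
    (hAR : ∀ M X : ModF L, Ext1Zero M X ↔
      ∀ f : X ⟶ (tau.functor.obj ⟨M⟩).as,
        FactorsThroughClass {Y : ModF L | Injective Y} f)
    {C T F : Set (ModF L)} (hct : IsCotorsionPair C T) (ht : IsTorsionPair T F) :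
    ∃ e : AddQuot C {X : ModF L | Projective X} ⥤ ObjectProperty.FullSubcategory (· ∈ F),
      e.IsEquivalence ∧
      ∀ (X : ModF L) (hX : X ∈ C),
        Nonempty ((⟨(e.obj ((Quotient.functor
            (quotRel C {X : ModF L | Projective X})).obj ⟨X, hX⟩)).obj⟩ :
          StableCat {X : ModF L | Injective X}) ≅ tau.functor.obj ⟨X⟩) :=
  exists_equivalence_addQuot_torsionFree tau hAR hct ht

/-- Let `Λ` be an Artin algebra (over a commutative artinian ring
`R`) and `(C, T, F)` a cotorsion torsion triple in `mod Λ`.  Given the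
Auslander–Reiten translation `τ`, an equivalence from the projectively stable to the
injectively stable category of `mod Λ` satisfying Auslander–Reiten duality (in the
form: `Ext¹(M, X) = 0` iff every map `X ⟶ τM` factors through an injective), `τ`
induces an equivalence from the additive quotient `C/(proj Λ)` to `F`. -/
theorem statement15 (R : Type u) [CommRing R] [IsArtinianRing R]
    (L : Type u) [Ring L] [Algebra R L] [Module.Finite R L]
    [Abelian (ModF L)]
    (tau : StableCat {X : ModF L | Projective X} ≌ StableCat {X : ModF L | Injective X})
    (hAR : ∀ M X : ModF L, Ext1Zero M X ↔
      ∀ f : X ⟶ (tau.functor.obj ⟨M⟩).as,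
        FactorsThroughClass {Y : ModF L | Injective Y} f)
    {C T F : Set (ModF L)} (hct : IsCotorsionPair C T) (ht : IsTorsionPair T F) :
    ∃ e : AddQuot C {X : ModF L | Projective X} ⥤ ObjectProperty.FullSubcategory (· ∈ F),
      e.IsEquivalence ∧
      ∀ (X : ModF L) (hX : X ∈ C),
        Nonempty ((⟨(e.obj ((Quotient.functor
            (quotRel C {X : ModF L | Projective X})).obj ⟨X, hX⟩)).obj⟩ :
          StableCat {X : ModF L | Injective X}) ≅ tau.functor.obj ⟨X⟩) :=
  statement15_general L tau hAR hct ht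

end Paper
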